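/- On K' = K ⊕ K define, for t ≥ 0, S'_t(f ⊕ g) = (S_t f + J_t g) ⊕ (S_t^* g), where (J_t g)(x) = g(t−x) for 0 < x < t and (J_t g)(x) = 0 for x > t. Then every S'_t is a unitary operator on K', S'_0 = I, S'_{t+s} = S'_t S'_s for all s, t ≥ 0, t ↦ S'_t(f ⊕ g) is continuous for every f, g, and S'_t(f ⊕ 0) = (S_t f) ⊕ 0; that is, (S'_t)_{t≥0} is a strongly continuous semigroup of unitaries dilating the right-shift semigroup (S_t). -/

import Mathlib

/-!
Gluing `f ⊕ g` into the function equal to `f` on `(0, ∞)` and to `x ↦ g (-x)` on `(-∞, 0)` is a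
unitary `K ⊕ K ≅ L²(ℝ)`. It conjugates `S'_t` into the translation `h ↦ h (· - t)` of `L²(ℝ)`:
`S_t f + J_t g` fills `(0, ∞)` with `f (x - t)` for `x > t` and with `g (t - x)` for `x < t`,
while `S_t^* g = g (· + t)` carries the rest of the reflected `g`. Hence `(S'_t)` inherits
unitarity, the semigroup law and strong continuity from the translation group of `L²(ℝ)`.
-/

open MeasureTheory

noncomputable section

/-- The measure defining `K = L²(0,∞)`. -/
def mu0 : Measure ℝ := volume.restrict (Set.Ioi (0:ℝ))

/-- The Hilbert space `K = L²(0,∞)`. -/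
abbrev Kspace := Lp ℂ 2 mu0

/-- The Hilbert space `K' = K ⊕ K`. -/
abbrev K2 := WithLp 2 (Kspace × Kspace)

/-- The identification `f ⊕ g` of a pair with an element of `K' = K ⊕ K`. -/
def pmk (f g : Kspace) : K2 := (WithLp.equiv 2 (Kspace × Kspace)).symm (f, g)

open Set Filter ContinuousLinearMap
open scoped ENNReal InnerProductSpace

namespace ShiftDilation

section Translation

variable {E : Type*} [NormedAddCommGroup E] {p : ℝ≥0∞}

/-- `ℝᵈᵃᵃ` acts on `Lp E p volume` by `(DomAddAct.mk c +ᵥ h) x = h (c + x)`, so the right shift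
by `t` is the action of `DomAddAct.mk (-t)`. -/
def translateLp (t : ℝ) (h : Lp E p (volume : Measure ℝ)) : Lp E p (volume : Measure ℝ) :=
  DomAddAct.mk (-t) +ᵥ h

lemma coeFn_translateLp (t : ℝ) (h : Lp E p (volume : Measure ℝ)) :
    translateLp t h =ᵐ[volume] fun x => h (x - t) := by
  filter_upwards [DomAddAct.vadd_Lp_ae_eq (DomAddAct.mk (-t)) h] with x hx
  rw [translateLp, hx, Equiv.symm_apply_apply, vadd_eq_add, neg_add_eq_sub]

lemma norm_translateLp (t : ℝ) (h : Lp E p (volume : Measure ℝ)) : ‖translateLp t h‖ = ‖h‖ :=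
  DomAddAct.norm_vadd_Lp _ h

@[simp]
lemma translateLp_zero (h : Lp E p (volume : Measure ℝ)) : translateLp 0 h = h := by
  rw [translateLp, neg_zero, DomAddAct.mk_zero, zero_vadd]

lemma translateLp_add (s t : ℝ) (h : Lp E p (volume : Measure ℝ)) :
    translateLp (s + t) h = translateLp s (translateLp t h) := by
  rw [translateLp, translateLp, translateLp, vadd_vadd, ← DomAddAct.mk_add, neg_add, add_comm]

lemma continuous_translateLp [Fact (1 ≤ p)] (hp : p ≠ ∞) (h : Lp E p (volume : Measure ℝ)) :
    Continuous fun t => translateLp t h :=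
  have : Fact (p ≠ ∞) := ⟨hp⟩
  (DomAddAct.continuous_mk.comp continuous_neg).vadd continuous_const

end Translation

section ExtendByZero

variable {α E : Type*} [MeasurableSpace α] {μ : Measure α} {s : Set α} [NormedAddCommGroup E]
  {p : ℝ≥0∞}

lemma memLp_indicator_of_restrict (hs : MeasurableSet s) (f : Lp E p (μ.restrict s)) :
    MemLp (s.indicator f) p μ :=
  (memLp_indicator_iff_restrict hs).2 (Lp.memLp f)

variable [Fact (1 ≤ p)] (𝕜 : Type*) [NormedRing 𝕜] [Module 𝕜 E] [IsBoundedSMul 𝕜 E]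

def extendByZero (hs : MeasurableSet s) : Lp E p (μ.restrict s) →ₗᵢ[𝕜] Lp E p μ where
  toFun f := (memLp_indicator_of_restrict hs f).toLp
  map_add' f g := by
    rw [← MemLp.toLp_add]
    refine MemLp.toLp_congr _ _ ?_
    simpa only [indicator_add'] using (ae_eq_restrict_iff_indicator_ae_eq hs).1 (Lp.coeFn_add f g)
  map_smul' c f := by
    rw [RingHom.id_apply, ← MemLp.toLp_const_smul]
    refine MemLp.toLp_congr _ _ ?_
    exact ((ae_eq_restrict_iff_indicator_ae_eq hs).1 (Lp.coeFn_smul c f)).trans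
      (indicator_const_smul s c _).eventuallyEq
  norm_map' f := by
    rw [LinearMap.coe_mk, AddHom.coe_mk, Lp.norm_toLp, eLpNorm_indicator_eq_eLpNorm_restrict hs,
      Lp.norm_def]

variable {𝕜}

lemma coeFn_extendByZero (hs : MeasurableSet s) (f : Lp E p (μ.restrict s)) :
    extendByZero 𝕜 hs f =ᵐ[μ] s.indicator f :=
  (memLp_indicator_of_restrict hs f).coeFn_toLp

end ExtendByZero

abbrev L2R := Lp ℂ 2 (volume : Measure ℝ)

section HalfLine

def zeroExt (f : Kspace) : ℝ → ℂ := (Ioi 0).indicator f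

lemma zeroExt_of_nonpos (f : Kspace) {x : ℝ} (hx : x ≤ 0) : zeroExt f x = 0 :=
  indicator_of_notMem (not_lt.2 hx) _

lemma zeroExt_ae_eq_indicator {f : Kspace} {u : ℝ → ℂ} (h : (f : ℝ → ℂ) =ᵐ[mu0] u) :
    zeroExt f =ᵐ[volume] (Ioi 0).indicator u :=
  (ae_eq_restrict_iff_indicator_ae_eq measurableSet_Ioi).1 h

lemma zeroExt_add (u v : Kspace) : zeroExt (u + v) =ᵐ[volume] zeroExt u + zeroExt v :=
  (zeroExt_ae_eq_indicator (Lp.coeFn_add u v)).trans (indicator_add' _ _ _).eventuallyEq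

lemma memLp_zeroExt (f : Kspace) : MemLp (zeroExt f) 2 volume :=
  memLp_indicator_of_restrict measurableSet_Ioi f

abbrev extendByZeroK : Kspace →ₗᵢ[ℂ] L2R := extendByZero ℂ measurableSet_Ioi

lemma coeFn_extendByZeroK (f : Kspace) : extendByZeroK f =ᵐ[volume] zeroExt f :=
  coeFn_extendByZero measurableSet_Ioi f

lemma inner_eq_integral_zeroExt (u v : Kspace) :
    ⟪u, v⟫_ℂ = ∫ x, ⟪zeroExt u x, zeroExt v x⟫_ℂ := by
  rw [← extendByZeroK.inner_map_map, L2.inner_def]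
  refine integral_congr_ae ?_
  filter_upwards [coeFn_extendByZeroK u, coeFn_extendByZeroK v] with x hu hv
  rw [hu, hv]

end HalfLine

section Operators

def IsRightShift (t : ℝ) (T : Kspace →L[ℂ] Kspace) : Prop :=
  ∀ f : Kspace, (T f : ℝ → ℂ) =ᵐ[mu0] fun x => if t < x then f (x - t) else 0

def IsFlip (t : ℝ) (J : Kspace →L[ℂ] Kspace) : Prop :=
  ∀ g : Kspace, (J g : ℝ → ℂ) =ᵐ[mu0] fun x => if x < t then g (t - x) else 0

variable {t : ℝ} {T J : Kspace →L[ℂ] Kspace}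

lemma IsRightShift.zeroExt_apply (hT : IsRightShift t T) (ht : 0 ≤ t) (f : Kspace) :
    zeroExt (T f) =ᵐ[volume] fun x => zeroExt f (x - t) := by
  refine (zeroExt_ae_eq_indicator (hT f)).trans (Eventually.of_forall fun x => ?_)
  simp only [zeroExt, indicator, mem_Ioi]
  split_ifs <;> first | rfl | (exfalso; linarith)

lemma IsFlip.zeroExt_apply (hJ : IsFlip t J) (g : Kspace) :
    zeroExt (J g) =ᵐ[volume] (Ioi 0).indicator fun x => zeroExt g (t - x) := by
  refine (zeroExt_ae_eq_indicator (hJ g)).trans (Eventually.of_forall fun x => ?_)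
  simp only [zeroExt, indicator, mem_Ioi]
  split_ifs <;> first | rfl | (exfalso; linarith)

lemma IsRightShift.zeroExt_adjoint_apply (hT : IsRightShift t T) (ht : 0 ≤ t) (g : Kspace) :
    zeroExt (adjoint T g) =ᵐ[volume] (Ioi 0).indicator fun x => zeroExt g (x + t) := by
  have hL : MemLp (fun x => zeroExt g (x + t)) 2 mu0 :=
    ((memLp_zeroExt g).comp_measurePreserving (measurePreserving_add_right volume t)).restrict _
  have hLg : zeroExt hL.toLp =ᵐ[volume] (Ioi 0).indicator fun x => zeroExt g (x + t) :=
    zeroExt_ae_eq_indicator hL.coeFn_toLp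
  suffices adjoint T g = hL.toLp by rw [this]; exact hLg
  refine ext_inner_left ℂ fun f => ?_
  rw [adjoint_inner_right, inner_eq_integral_zeroExt, inner_eq_integral_zeroExt]
  calc ∫ x, ⟪zeroExt (T f) x, zeroExt g x⟫_ℂ
      = ∫ x, ⟪zeroExt f (x - t), zeroExt g x⟫_ℂ :=
        integral_congr_ae (by filter_upwards [hT.zeroExt_apply ht f] with x hx; rw [hx])
    _ = ∫ x, ⟪zeroExt f x, zeroExt g (x + t)⟫_ℂ := by
        rw [← integral_add_right_eq_self _ t]
        simp only [add_sub_cancel_right]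
    _ = ∫ x, ⟪zeroExt f x, zeroExt hL.toLp x⟫_ℂ := by
        refine integral_congr_ae ?_
        filter_upwards [hLg] with x hx
        rw [hx]
        rcases le_or_gt x 0 with hx0 | hx0
        · rw [zeroExt_of_nonpos f hx0, inner_zero_left, inner_zero_left]
        · rw [indicator_of_mem (mem_Ioi.2 hx0)]

end Operators

section Glue

def reflect : L2R →ₗᵢ[ℂ] L2R :=
  Lp.compMeasurePreservingₗᵢ ℂ Neg.neg (Measure.measurePreserving_neg volume)

lemma comp_neg_ae_eq {u v : ℝ → ℂ} (h : u =ᵐ[volume] v) :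
    (fun x => u (-x)) =ᵐ[volume] fun x => v (-x) :=
  (Measure.measurePreserving_neg volume).quasiMeasurePreserving.ae_eq_comp h

lemma coeFn_reflect_extendByZeroK (g : Kspace) :
    reflect (extendByZeroK g) =ᵐ[volume] fun x => zeroExt g (-x) :=
  (Lp.coeFn_compMeasurePreserving _ _).trans (comp_neg_ae_eq (coeFn_extendByZeroK g))

lemma inner_extendByZeroK_reflect (f g : Kspace) :
    ⟪extendByZeroK f, reflect (extendByZeroK g)⟫_ℂ = 0 := by
  rw [L2.inner_def]
  refine integral_eq_zero_of_ae ?_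
  filter_upwards [coeFn_extendByZeroK f, coeFn_reflect_extendByZeroK g] with x hf hg
  rw [hf, hg]
  rcases le_or_gt x 0 with hx | hx
  · rw [zeroExt_of_nonpos f hx, inner_zero_left]; rfl
  · rw [zeroExt_of_nonpos g (by linarith), inner_zero_right]; rfl

def glueₗ : K2 →ₗ[ℂ] L2R :=
  extendByZeroK.toLinearMap ∘ₗ WithLp.fstₗ 2 ℂ Kspace Kspace
    + (reflect.comp extendByZeroK).toLinearMap ∘ₗ WithLp.sndₗ 2 ℂ Kspace Kspace

@[simp]
lemma pmk_fst (f g : Kspace) : (pmk f g).fst = f := rfl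

@[simp]
lemma pmk_snd (f g : Kspace) : (pmk f g).snd = g := rfl

lemma glueₗ_apply (z : K2) :
    glueₗ z = extendByZeroK z.fst + reflect (extendByZeroK z.snd) := rfl

lemma norm_glueₗ (z : K2) : ‖glueₗ z‖ = ‖z‖ := by
  refine (mul_self_inj (norm_nonneg _) (norm_nonneg _)).1 ?_
  rw [glueₗ_apply,
    norm_add_sq_eq_norm_sq_add_norm_sq_of_inner_eq_zero _ _ (inner_extendByZeroK_reflect _ _),
    ← pow_two, ← pow_two, ← pow_two, WithLp.prod_norm_sq_eq_of_L2,
    LinearIsometry.norm_map, LinearIsometry.norm_map, LinearIsometry.norm_map]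

lemma coeFn_glueₗ_pmk (f g : Kspace) :
    glueₗ (pmk f g) =ᵐ[volume] fun x => zeroExt f x + zeroExt g (-x) := by
  filter_upwards [Lp.coeFn_add (extendByZeroK f) (reflect (extendByZeroK g)),
    coeFn_extendByZeroK f, coeFn_reflect_extendByZeroK g] with x hadd hf hg
  rw [glueₗ_apply, pmk_fst, pmk_snd, hadd, Pi.add_apply, hf, hg]

lemma glueₗ_surjective : Function.Surjective glueₗ := by
  intro h
  have hf : MemLp h 2 mu0 := (Lp.memLp h).restrict _
  have hg : MemLp (fun x => h (-x)) 2 mu0 :=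
    ((Lp.memLp h).comp_measurePreserving (Measure.measurePreserving_neg volume)).restrict _
  refine ⟨pmk hf.toLp hg.toLp, Lp.ext ((coeFn_glueₗ_pmk _ _).trans ?_)⟩
  filter_upwards [zeroExt_ae_eq_indicator hf.coeFn_toLp,
    comp_neg_ae_eq (zeroExt_ae_eq_indicator hg.coeFn_toLp), Measure.ae_ne volume 0]
    with x hfx hgx hx0
  rw [hfx, hgx]
  rcases hx0.lt_or_gt with hx | hx <;> simp [indicator, hx, hx.not_gt]

def glue : K2 ≃ₗᵢ[ℂ] L2R :=
  LinearIsometryEquiv.ofSurjective ⟨glueₗ, norm_glueₗ⟩ glueₗ_surjective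

lemma coeFn_glue_pmk (f g : Kspace) :
    glue (pmk f g) =ᵐ[volume] fun x => zeroExt f x + zeroExt g (-x) :=
  coeFn_glueₗ_pmk f g

end Glue

lemma translateLp_glue_pmk {t : ℝ} {T J : Kspace →L[ℂ] Kspace} (hT : IsRightShift t T)
    (hJ : IsFlip t J) (ht : 0 ≤ t) (f g : Kspace) :
    translateLp t (glue (pmk f g)) = glue (pmk (T f + J g) (adjoint T g)) := by
  have hshift : translateLp t (glue (pmk f g)) =ᵐ[volume]
      fun x => zeroExt f (x - t) + zeroExt g (t - x) := by
    refine (coeFn_translateLp t _).trans ?_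
    filter_upwards [(measurePreserving_sub_right volume t).quasiMeasurePreserving.ae_eq_comp
      (coeFn_glue_pmk f g)] with x hx
    simpa only [Function.comp_apply, neg_sub] using hx
  refine Lp.ext (hshift.trans (EventuallyEq.trans ?_ (coeFn_glue_pmk _ _).symm))
  filter_upwards [zeroExt_add (T f) (J g), hT.zeroExt_apply ht f, hJ.zeroExt_apply g,
    comp_neg_ae_eq (hT.zeroExt_adjoint_apply ht g), Measure.ae_ne volume 0]
    with x hadd hTf hJg hTg hx0
  rw [hadd, Pi.add_apply, hTf, hJg, hTg]
  rcases hx0.lt_or_gt with hx | hx <;> simp [indicator, hx, hx.not_gt, neg_add_eq_sub]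

end ShiftDilation

open ShiftDilation

/-- on `K' = K ⊕ K` define, for `t ≥ 0`,
`S'_t(f ⊕ g) = (S_t f + J_t g) ⊕ (S_t^* g)`, where `(J_t g)(x) = g(t-x)` for
`0 < x < t` and `0` for `x > t`.  Then every `S'_t` is unitary, `S'_0 = I`,
`S'_{t+s} = S'_t S'_s`, `t ↦ S'_t(f ⊕ g)` is continuous, and
`S'_t(f ⊕ 0) = (S_t f) ⊕ 0`; i.e. `(S'_t)` is a strongly continuous semigroup of
unitaries dilating the right-shift semigroup `(S_t)`. -/
theorem stmt_12
    -- the right-shift semigroup `S` on `K` and its adjoint: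
    (S : ℝ → Kspace →L[ℂ] Kspace)
    (hS : ∀ t ≥ (0:ℝ), ∀ f : Kspace,
      (S t f : ℝ → ℂ) =ᵐ[mu0] fun x => if t < x then f (x - t) else 0)
    -- the flip operators `J_t`:
    (J : ℝ → Kspace →L[ℂ] Kspace)
    (hJ : ∀ t ≥ (0:ℝ), ∀ g : Kspace,
      (J t g : ℝ → ℂ) =ᵐ[mu0] fun x => if x < t then g (t - x) else 0)
    -- the dilation `S'`:
    (S' : ℝ → K2 →L[ℂ] K2)
    (hS' : ∀ t ≥ (0:ℝ), ∀ f g : Kspace,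
      S' t (pmk f g) = pmk (S t f + J t g) (ContinuousLinearMap.adjoint (S t) g)) :
    (∀ t ≥ (0:ℝ), (∀ x : K2, ‖S' t x‖ = ‖x‖) ∧ Function.Surjective (S' t)) ∧
    S' 0 = 1 ∧
    (∀ s ≥ (0:ℝ), ∀ t ≥ (0:ℝ), S' (s + t) = (S' s).comp (S' t)) ∧
    (∀ f g : Kspace, ContinuousOn (fun t => S' t (pmk f g)) (Set.Ici (0:ℝ))) ∧
    (∀ t ≥ (0:ℝ), ∀ f : Kspace, S' t (pmk f 0) = pmk (S t f) 0) := by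
  have hconj : ∀ t ≥ (0:ℝ), ∀ z, S' t z = glue.symm (translateLp t (glue z)) := fun t ht z => by
    rw [eq_comm, LinearIsometryEquiv.symm_apply_eq]
    exact (translateLp_glue_pmk (hS t ht) (hJ t ht) ht _ _).trans
      (congrArg glue (hS' t ht z.fst z.snd).symm)
  refine ⟨fun t ht => ⟨fun z => ?_, fun w => ?_⟩, ?_, ?_, ?_, ?_⟩
  · rw [hconj t ht, LinearIsometryEquiv.norm_map, norm_translateLp, LinearIsometryEquiv.norm_map]
  · refine ⟨glue.symm (translateLp (-t) (glue w)), ?_⟩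
    rw [hconj t ht, LinearIsometryEquiv.apply_symm_apply, ← translateLp_add, add_neg_cancel,
      translateLp_zero, LinearIsometryEquiv.symm_apply_apply]
  · ext1 z
    rw [hconj 0 le_rfl, translateLp_zero, LinearIsometryEquiv.symm_apply_apply]
    rfl
  · intro s hs t ht
    ext1 z
    rw [ContinuousLinearMap.comp_apply, hconj _ (add_nonneg hs ht), hconj t ht, hconj s hs,
      LinearIsometryEquiv.apply_symm_apply, translateLp_add]
  · intro f g
    have hcont := continuous_translateLp ENNReal.ofNat_ne_top (glue (pmk f g))
    exact (glue.symm.continuous.comp hcont).continuousOn.congr fun t ht => hconj t ht _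
  · intro t ht f
    rw [hS' t ht, map_zero, map_zero, add_zero]
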